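/- Let F = [T_2^0, T_2^2], the 2×2 matrix with columns (0,0)^T and (1,1)^T. Then for every n ≥ 2, sat(n, F) = 3. -/

import Mathlib

/-- `F` is a submatrix of `M` (up to row/column permutations): there are injections
selecting rows and columns of `M` giving `F`. -/
def IsSubmatrix {α : Type*} {k c n m : ℕ} (F : Fin k → Fin c → α) (M : Fin n → Fin m → α) :
    Prop :=
  ∃ r : Fin k → Fin n, ∃ s : Fin c → Fin m,
    Function.Injective r ∧ Function.Injective s ∧ ∀ i j, M (r i) (s j) = F i j

/-- A matrix is simple if its columns are pairwise distinct. -/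
def Simple' {α : Type*} {n m : ℕ} (M : Fin n → Fin m → α) : Prop :=
  ∀ j₁ j₂ : Fin m, (∀ i, M i j₁ = M i j₂) → j₁ = j₂

/-- `C` occurs as a column of `M`. -/
def IsCol {α : Type*} {n m : ℕ} (M : Fin n → Fin m → α) (C : Fin n → α) : Prop :=
  ∃ j, ∀ i, M i j = C i

/-- The matrix `[M, C]` obtained by appending the column `C` to `M`. -/
def addCol {α : Type*} {n m : ℕ} (M : Fin n → Fin m → α) (C : Fin n → α) :
    Fin n → Fin (m + 1) → α :=
  fun i j => if h : (j : ℕ) < m then M i ⟨j, h⟩ else C i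

/-- `M` is `F`-saturated: simple, `F`-free, and adding any missing column creates `F`. -/
def Saturated {α : Type*} {k c n m : ℕ} (F : Fin k → Fin c → α) (M : Fin n → Fin m → α) :
    Prop :=
  Simple' M ∧ ¬ IsSubmatrix F M ∧
    ∀ C : Fin n → α, ¬ IsCol M C → IsSubmatrix F (addCol M C)

/-- The set of sizes (numbers of columns) of `F`-saturated `n`-row matrices. -/
def satSet {α : Type*} {k c : ℕ} (F : Fin k → Fin c → α) (n : ℕ) : Set ℕ :=
  {m | ∃ M : Fin n → Fin m → α, Saturated F M}

/-- The set of sizes of simple `F`-free `n`-row matrices. -/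
def forbSet {α : Type*} {k c : ℕ} (F : Fin k → Fin c → α) (n : ℕ) : Set ℕ :=
  {m | ∃ M : Fin n → Fin m → α, Simple' M ∧ ¬ IsSubmatrix F M}

/-- `K_k`: the `k × 2^k` 0-1 matrix of all distinct 0-1 columns of length `k`. -/
def Kfull (k : ℕ) : Fin k → Fin (2 ^ k) → Bool :=
  fun i j => Nat.testBit j.val i.val


/-!
Two columns `p`, `q` of a 0-1 matrix form `F` exactly when `p < q` on two rows; call them
compatible when neither does this to the other. Appending a column compatible with every column
of an `F`-free matrix creates no `F`, so a saturated matrix admits no new such column. With at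
most two columns and `n ≥ 2` rows one always exists: flip an entry of a single column; for two
compatible columns `c ≠ d` take `c ⊔ d` if they are incomparable, and otherwise `d` is `c` with
one entry raised and flipping a suitable entry in another row works. Conversely, the indicator
vectors of `{r}`, `{s}`, `{r, s}` form an `F`-free matrix with which every new column clashes.
-/

open Function

section Clash

variable {ι : Type*}

/-- The columns `p` and `q` of a matrix form a copy of `F`, with `p` as its zero column. -/
def Clash (p q : ι → Bool) : Prop :=
  ∃ i j, i ≠ j ∧ p i < q i ∧ p j < q j

def Compatible (p q : ι → Bool) : Prop :=
  ¬ Clash p q ∧ ¬ Clash q p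

lemma Compatible.symm {p q : ι → Bool} (h : Compatible p q) : Compatible q p :=
  And.symm h

lemma not_clash_self (p : ι → Bool) : ¬ Clash p p :=
  fun ⟨_, _, _, h, _⟩ => lt_irrefl _ h

lemma not_clash_of_le_off {p q : ι → Bool} (x : ι) (h : ∀ z, z ≠ x → q z ≤ p z) :
    ¬ Clash p q := by
  rintro ⟨i, j, hij, hi, hj⟩
  rcases eq_or_ne i x with rfl | hix
  · exact (h j hij.symm).not_gt hj
  · exact (h i hix).not_gt hi

lemma compatible_update_self [DecidableEq ι] (p : ι → Bool) (x : ι) (b : Bool) :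
    Compatible p (update p x b) :=
  ⟨not_clash_of_le_off x fun _ hz => (update_of_ne hz b p).le,
    not_clash_of_le_off x fun _ hz => (update_of_ne hz b p).ge⟩

lemma Compatible.sup_right {c d : ι → Bool} (h : Compatible c d) : Compatible c (c ⊔ d) :=
  ⟨fun ⟨i, j, hij, hi, hj⟩ =>
      h.1 ⟨i, j, hij, (lt_sup_iff.mp hi).resolve_left (lt_irrefl _),
        (lt_sup_iff.mp hj).resolve_left (lt_irrefl _)⟩,
    fun ⟨i, _, _, hi, _⟩ => (le_sup_left : c i ≤ c i ⊔ d i).not_gt hi⟩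

/-- With `d` obtained from `c` by raising row `x`, flip `c` at another row `y` if `c y = false`
and `d` otherwise: the flip then goes against the change at `x`. -/
lemma exists_compatible_of_lt [DecidableEq ι] [Nontrivial ι] {c d : ι → Bool} (hlt : c < d)
    (h : ¬ Clash c d) : ∃ C, C ≠ c ∧ C ≠ d ∧ Compatible c C ∧ Compatible d C := by
  obtain ⟨x, hx⟩ := (Pi.lt_def.mp hlt).2
  obtain ⟨hcx, hdx⟩ := Bool.lt_iff.mp hx
  have heq : ∀ z, z ≠ x → c z = d z := fun z hz =>
    (hlt.le z).eq_of_not_lt fun hz' => h ⟨z, x, hz, hz', hx⟩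
  obtain ⟨y, hyx⟩ := exists_ne x
  cases hcy : c y
  · refine ⟨update c y true, fun he => ?_, fun he => ?_, compatible_update_self c y true,
      not_clash_of_le_off y fun z hz => ?_, not_clash_of_le_off x fun z hz => ?_⟩
    · simpa [hcy] using congrFun he y
    · simpa [hyx.symm, hcx, hdx] using congrFun he x
    · rcases eq_or_ne z x with rfl | hzx
      · simp [update_of_ne hz, hcx]
      · simp [update_of_ne hz, heq z hzx]
    · rcases eq_or_ne z y with rfl | hzy
      · simp
      · simp [update_of_ne hzy, heq z hz]
  · refine ⟨update d y false, fun he => ?_, fun he => ?_,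
      ⟨not_clash_of_le_off x fun z hz => ?_, not_clash_of_le_off y fun z hz => ?_⟩,
      compatible_update_self d y false⟩
    · simpa [hyx.symm, hcx, hdx] using congrFun he x
    · simpa [← heq y hyx, hcy] using congrFun he y
    · rcases eq_or_ne z y with rfl | hzy
      · simp
      · simp [update_of_ne hzy, heq z hz]
    · rcases eq_or_ne z x with rfl | hzx
      · simp [update_of_ne hz, hdx]
      · simp [update_of_ne hz, heq z hzx]

lemma Compatible.exists_compatible_ne [DecidableEq ι] [Nontrivial ι] {c d : ι → Bool}
    (h : Compatible c d) (hne : c ≠ d) :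
    ∃ C, C ≠ c ∧ C ≠ d ∧ Compatible c C ∧ Compatible d C := by
  by_cases hcd : c ≤ d
  · exact exists_compatible_of_lt (hcd.lt_of_ne hne) h.1
  by_cases hdc : d ≤ c
  · obtain ⟨C, hCd, hCc, hdC, hcC⟩ := exists_compatible_of_lt (hdc.lt_of_ne hne.symm) h.2
    exact ⟨C, hCc, hCd, hcC, hdC⟩
  refine ⟨c ⊔ d, fun he => hdc (sup_eq_left.mp he), fun he => hcd (sup_eq_right.mp he),
    h.sup_right, ?_⟩
  rw [sup_comm]
  exact h.symm.sup_right

end Clash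

section Matrix

variable {n m : ℕ}

lemma isSubmatrix_iff_exists_clash (M : Fin n → Fin m → Bool) :
    IsSubmatrix (![![false, true], ![false, true]] : Fin 2 → Fin 2 → Bool) M ↔
      ∃ a b, Clash (fun i => M i a) (fun i => M i b) := by
  constructor
  · rintro ⟨r, s, hr, -, h⟩
    refine ⟨s 0, s 1, r 0, r 1, hr.ne (by decide), ?_, ?_⟩ <;>
      simp [Bool.lt_iff, h]
  · rintro ⟨a, b, i, j, hij, hi, hj⟩
    have hab : a ≠ b := by rintro rfl; exact lt_irrefl _ hi
    refine ⟨![i, j], ![a, b], ?_, ?_, ?_⟩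
    · simpa [Fin.cons_injective_iff] using hij
    · simpa [Fin.cons_injective_iff] using hab
    · simp only [Bool.lt_iff] at hi hj
      intro u v
      fin_cases u <;> fin_cases v <;> simp [hi, hj]

@[simp]
lemma addCol_castSucc (M : Fin n → Fin m → Bool) (C : Fin n → Bool) (i : Fin n) (a : Fin m) :
    addCol M C i a.castSucc = M i a := by
  simp [addCol]

@[simp]
lemma addCol_last (M : Fin n → Fin m → Bool) (C : Fin n → Bool) (i : Fin n) :
    addCol M C i (Fin.last m) = C i := by
  simp [addCol]

lemma isSubmatrix_addCol_iff (M : Fin n → Fin m → Bool) (C : Fin n → Bool) :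
    IsSubmatrix (![![false, true], ![false, true]] : Fin 2 → Fin 2 → Bool) (addCol M C) ↔
      IsSubmatrix (![![false, true], ![false, true]] : Fin 2 → Fin 2 → Bool) M ∨
        ∃ a, Clash (fun i => M i a) C ∨ Clash C (fun i => M i a) := by
  simp only [isSubmatrix_iff_exists_clash, Fin.exists_fin_succ', addCol_castSucc, addCol_last,
    exists_or, not_clash_self, or_false]
  exact or_assoc.trans (or_congr_right or_comm)

end Matrix

section LowerBound

variable {n m : ℕ}

lemma exists_compatible_not_isCol (hn : 2 ≤ n) (M : Fin n → Fin m → Bool) (hm : m ≤ 2)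
    (hM : Simple' M)
    (hfree : ¬ IsSubmatrix (![![false, true], ![false, true]] : Fin 2 → Fin 2 → Bool) M) :
    ∃ C, ¬ IsCol M C ∧ ∀ a, Compatible (fun i => M i a) C := by
  have : Nontrivial (Fin n) := Fin.nontrivial_iff_two_le.mpr hn
  rw [isSubmatrix_iff_exists_clash] at hfree
  interval_cases m
  · exact ⟨fun _ => false, fun ⟨j, _⟩ => j.elim0, fun a => a.elim0⟩
  · obtain ⟨x⟩ := (inferInstance : Nonempty (Fin n))
    refine ⟨update (fun i => M i 0) x (!M x 0), fun ⟨j, hj⟩ => ?_, fun a => ?_⟩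
    · simpa [Fin.fin_one_eq_zero j] using hj x
    · exact Fin.fin_one_eq_zero a ▸ compatible_update_self _ x _
  · have hcd : Compatible (fun i => M i 0) (fun i => M i 1) :=
      ⟨fun h => hfree ⟨0, 1, h⟩, fun h => hfree ⟨1, 0, h⟩⟩
    have hne : (fun i => M i 0) ≠ (fun i => M i 1) := fun h =>
      absurd (hM 0 1 (congrFun h)) (by decide)
    obtain ⟨C, hC0, hC1, h0, h1⟩ := hcd.exists_compatible_ne hne
    refine ⟨C, fun ⟨j, hj⟩ => ?_, Fin.forall_fin_two.mpr ⟨h0, h1⟩⟩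
    fin_cases j
    exacts [hC0 (funext hj).symm, hC1 (funext hj).symm]

lemma three_le_of_saturated (hn : 2 ≤ n) {M : Fin n → Fin m → Bool}
    (hM : Saturated (![![false, true], ![false, true]] : Fin 2 → Fin 2 → Bool) M) : 3 ≤ m := by
  obtain ⟨hsimple, hfree, hsat⟩ := hM
  by_contra! hm
  obtain ⟨C, hC, hcompat⟩ := exists_compatible_not_isCol hn M (by omega) hsimple hfree
  obtain hF | ⟨a, ha | ha⟩ := (isSubmatrix_addCol_iff M C).mp (hsat C hC)
  · exact hfree hF
  · exact (hcompat a).1 ha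
  · exact (hcompat a).2 ha

end LowerBound

section Witness

variable {n : ℕ}

/-- Its columns are the indicator vectors of `{r}`, `{s}` and `{r, s}`. -/
def pairMatrix (r s : Fin n) : Fin n → Fin 3 → Bool :=
  fun i => ![decide (i = r), decide (i = s), decide (i = r ∨ i = s)]

variable {r s : Fin n}

lemma pairMatrix_simple (hrs : r ≠ s) : Simple' (pairMatrix r s) := by
  intro a b h
  have hr := h r
  have hs := h s
  fin_cases a <;> fin_cases b <;> simp_all [pairMatrix, hrs.symm]

lemma not_clash_pairMatrix (a b : Fin 3) :
    ¬ Clash (fun i => pairMatrix r s i a) (fun i => pairMatrix r s i b) := by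
  fin_cases a <;> fin_cases b
  all_goals first
    | (refine not_clash_of_le_off r fun z hz => ?_; simp [pairMatrix, hz]; done)
    | (refine not_clash_of_le_off s fun z hz => ?_; simp [pairMatrix, hz])

lemma isCol_pairMatrix_of_eq_false_off {C : Fin n → Bool}
    (hC : ∀ z, z ≠ r → z ≠ s → C z = false) (hCrs : C r = true ∨ C s = true) :
    IsCol (pairMatrix r s) C := by
  have hC_eq : ∀ i, C i = (decide (i = r) && C r || decide (i = s) && C s) := by
    intro i
    by_cases hir : i = r
    · subst hir; by_cases his : i = s <;> simp [his]
    by_cases his : i = s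
    · subst his; simp [hir]
    simp [hir, his, hC i hir his]
  cases hCr : C r <;> cases hCs : C s
  · simp [hCr, hCs] at hCrs
  · exact ⟨1, fun i => by simp [pairMatrix, hC_eq i, hCr, hCs]⟩
  · exact ⟨0, fun i => by simp [pairMatrix, hC_eq i, hCr, hCs]⟩
  · exact ⟨2, fun i => by simp [pairMatrix, hC_eq i, hCr, hCs]⟩

lemma exists_clash_pairMatrix (hrs : r ≠ s) {C : Fin n → Bool} (hC : ¬ IsCol (pairMatrix r s) C) :
    ∃ a, Clash (fun i => pairMatrix r s i a) C ∨ Clash C (fun i => pairMatrix r s i a) := by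
  by_cases hzero : C r = false ∧ C s = false
  · exact ⟨2, .inr ⟨r, s, hrs, by simp [pairMatrix, hzero.1], by simp [pairMatrix, hzero.2]⟩⟩
  obtain ⟨z, hzr, hzs, hz⟩ : ∃ z, z ≠ r ∧ z ≠ s ∧ C z = true := by
    by_contra! hC'
    refine hC (isCol_pairMatrix_of_eq_false_off (fun z hzr hzs => ?_) ?_)
    · simpa using hC' z hzr hzs
    · simpa only [not_and_or, Bool.not_eq_false] using hzero
  cases hCr : C r
  · have hCs : C s = true := by simpa [hCr] using hzero
    exact ⟨0, .inl ⟨s, z, hzs.symm, by simp [pairMatrix, hrs.symm, hCs],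
      by simp [pairMatrix, hzr, hz]⟩⟩
  · exact ⟨1, .inl ⟨r, z, hzr.symm, by simp [pairMatrix, hrs, hCr],
      by simp [pairMatrix, hzs, hz]⟩⟩

lemma pairMatrix_saturated (hrs : r ≠ s) :
    Saturated (![![false, true], ![false, true]] : Fin 2 → Fin 2 → Bool) (pairMatrix r s) := by
  refine ⟨pairMatrix_simple hrs, ?_, fun C hC => ?_⟩
  · rw [isSubmatrix_iff_exists_clash]
    exact fun ⟨a, b, h⟩ => not_clash_pairMatrix a b h
  · exact (isSubmatrix_addCol_iff _ C).mpr (.inr (exists_clash_pairMatrix hrs hC))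

end Witness

theorem stmt_15 (n : ℕ) (hn : 2 ≤ n) :
    IsLeast (satSet (![![false, true], ![false, true]] : Fin 2 → Fin 2 → Bool) n) 3 :=
  ⟨⟨pairMatrix ⟨0, by omega⟩ ⟨1, by omega⟩, pairMatrix_saturated (by simp [Fin.ext_iff])⟩,
    fun _ ⟨_, hM⟩ => three_le_of_saturated hn hM⟩
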